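/- arXiv:1707.04777 — 11 statements merged into one kernel-verified Lean document; each statement's English description precedes it below -/
import Mathlib

section
/- Let A be a unital C*-algebra, τ : A → ℂ a continuous linear functional that is tracial (τ(xy) = τ(yx)), positive (τ(x*x) is a nonnegative real for all x), and faithful (τ(x*x) = 0 implies x = 0). Let ∂₁, ∂₂, ∂₃, ∂₄ be continuous ℂ-linear τ-invariant derivations on A satisfying ∂ᵢ(x*) = −(∂ᵢ(x))* for all x. For a self-adjoint f ∈ A set EH(f) := −(3/2) Σᵢ₌₁⁴ τ( 2·∂ᵢ((∂ᵢ e^f)·e^{−f})·e^f + (∂ᵢ e^f)·e^{−f}·(∂ᵢ e^f) ). Then EH(f) is a nonpositive real number, and EH(f) = 0 if and only if ∂ᵢ(e^f) = 0 for all i = 1, …, 4. -/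
open NormedSpace ComplexOrder

/-!
Integrating by parts against the `τ`-invariant derivation `∂`, each summand of the action
equals `-τ(∂u · e^{-f} · ∂u)` with `u = e^f`. Since `u` is self-adjoint, `∂u` is skew-adjoint,
and writing `e^{-f} = s²` with `s = e^{-f/2}` self-adjoint turns this into
`τ((s ∂u)* (s ∂u)) ≥ 0`. Faithfulness of `τ` and invertibility of `s` then identify the
vanishing of the action with `∂ᵢu = 0` for all `i`.
-/

section Derivation

variable {A M F : Type*} [Ring A] [AddCommGroup M] [FunLike F A M] [AddMonoidHomClass F A M]
  {τ : F} {D : A → A}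

theorem map_deriv_mul_eq_neg (hD : ∀ x y : A, D (x * y) = D x * y + x * D y)
    (hτD : ∀ x : A, τ (D x) = 0) (a b : A) : τ (D a * b) = -τ (a * D b) :=
  eq_neg_of_add_eq_zero_left <| by rw [← map_add, ← hD, hτD]

theorem map_two_mul_deriv_mul_mul_add_eq_neg (hD : ∀ x y : A, D (x * y) = D x * y + x * D y)
    (hτD : ∀ x : A, τ (D x) = 0) (u g : A) :
    τ (2 * D (D u * g) * u + D u * g * D u) = -τ (D u * g * D u) := by
  rw [mul_assoc, two_mul, map_add, map_add, map_deriv_mul_eq_neg hD hτD]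
  abel

end Derivation

theorem deriv_mem_skewAdjoint {A : Type*} [AddCommGroup A] [StarAddMonoid A] {D : A → A}
    (hDstar : ∀ x : A, D (star x) = -star (D x)) {u : A} (hu : IsSelfAdjoint u) :
    D u ∈ skewAdjoint A := by
  rw [skewAdjoint.mem_iff, ← neg_neg (star (D u)), ← hDstar, hu.star_eq]

theorem star_mul_self_of_isSelfAdjoint_of_mem_skewAdjoint {R : Type*} [Ring R] [StarRing R]
    {s a : R} (hs : IsSelfAdjoint s) (ha : a ∈ skewAdjoint R) :
    star (s * a) * (s * a) = -(a * (s * s) * a) := by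
  rw [star_mul, skewAdjoint.mem_iff.mp ha, hs.star_eq]
  noncomm_ring

theorem sum_map_star_mul_self_eq_zero_iff {A M F ι : Type*} [NonUnitalNonAssocSemiring A]
    [StarRing A] [AddCommMonoid M] [PartialOrder M] [IsOrderedAddMonoid M]
    [FunLike F A M] [AddMonoidHomClass F A M] {τ : F} [Fintype ι]
    (hpos : ∀ x : A, 0 ≤ τ (star x * x)) (hfaithful : ∀ x : A, τ (star x * x) = 0 → x = 0)
    (w : ι → A) : ∑ i, τ (star (w i) * w i) = 0 ↔ ∀ i, w i = 0 := by
  rw [Finset.sum_eq_zero_iff_of_nonneg fun i _ => hpos (w i)]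
  exact ⟨fun h i => hfaithful _ (h i (Finset.mem_univ i)), fun h i _ => by simp [h i]⟩

theorem NormedSpace.exp_eq_exp_half_mul_self {A : Type*} [NormedRing A]
    [NormedAlgebra ℂ A] [CompleteSpace A] (a : A) :
    exp a = exp ((2⁻¹ : ℂ) • a) * exp ((2⁻¹ : ℂ) • a) := by
  let : NormedAlgebra ℚ A := NormedAlgebra.restrictScalars ℚ ℂ A
  rw [← sq, ← exp_nsmul, ← Nat.cast_smul_eq_nsmul ℂ, smul_smul]
  norm_num

theorem stmt_2_general {A : Type*} [NormedRing A] [StarRing A] [CStarRing A]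
    [NormedAlgebra ℂ A] [CompleteSpace A] [StarModule ℂ A]
    (τ : A →L[ℂ] ℂ)
    (hpos : ∀ x : A, 0 ≤ τ (star x * x))
    (hfaithful : ∀ x : A, τ (star x * x) = 0 → x = 0)
    (D : Fin 4 → A →L[ℂ] A)
    (hD : ∀ i, ∀ x y : A, D i (x * y) = D i x * y + x * D i y)
    (hτD : ∀ i, ∀ x : A, τ (D i x) = 0)
    (hDstar : ∀ i, ∀ x : A, D i (star x) = - star (D i x))
    (f : A) (hf : IsSelfAdjoint f) :
    (-(3/2 : ℂ) * ∑ i : Fin 4,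
        τ (2 * D i (D i (NormedSpace.exp f) * NormedSpace.exp (-f)) * NormedSpace.exp f
            + D i (NormedSpace.exp f) * NormedSpace.exp (-f) * D i (NormedSpace.exp f)) ≤ 0) ∧
    (-(3/2 : ℂ) * ∑ i : Fin 4,
        τ (2 * D i (D i (NormedSpace.exp f) * NormedSpace.exp (-f)) * NormedSpace.exp f
            + D i (NormedSpace.exp f) * NormedSpace.exp (-f) * D i (NormedSpace.exp f)) = 0
      ↔ ∀ i : Fin 4, D i (NormedSpace.exp f) = 0) := by
  let : NormedAlgebra ℚ A := NormedAlgebra.restrictScalars ℚ ℂ A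
  set s := exp ((2⁻¹ : ℂ) • -f)
  have hs : IsSelfAdjoint s := by
    refine IsSelfAdjoint.exp ?_
    rw [IsSelfAdjoint, star_smul, star_neg, hf.star_eq, star_inv₀, star_ofNat]
  have hsummand : ∀ i, τ (2 * D i (D i (exp f) * exp (-f)) * exp f
      + D i (exp f) * exp (-f) * D i (exp f))
        = τ (star (s * D i (exp f)) * (s * D i (exp f))) := by
    intro i
    rw [map_two_mul_deriv_mul_mul_add_eq_neg (hD i) (hτD i), exp_eq_exp_half_mul_self (-f),
      star_mul_self_of_isSelfAdjoint_of_mem_skewAdjoint hs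
        (deriv_mem_skewAdjoint (hDstar i) hf.exp), map_neg]
  simp only [hsummand]
  refine ⟨?_, ?_⟩
  · exact mul_nonpos_of_nonpos_of_nonneg (by norm_num [Complex.le_def])
      (Finset.sum_nonneg fun i _ => hpos _)
  · rw [mul_eq_zero, or_iff_right (by norm_num), sum_map_star_mul_self_eq_zero_iff hpos hfaithful]
    exact forall_congr' fun i => (isUnit_exp _).mul_right_eq_zero

/-- **Non-positivity and extremum of the Einstein–Hilbert action on the
noncommutative 4-torus.** For a unital C*-algebra `A` with a continuous tracial, positive
and faithful linear functional `τ` and four continuous `τ`-invariant derivations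
satisfying `∂ᵢ(x*) = −(∂ᵢx)*`, and self-adjoint `f`, the Einstein–Hilbert action
`EH(f) = −(3/2) Σᵢ τ(2·∂ᵢ((∂ᵢe^f)e^{−f})·e^f + (∂ᵢe^f)e^{−f}(∂ᵢe^f))` is a nonpositive
real number, and it vanishes iff `∂ᵢ(e^f) = 0` for all `i`. -/
theorem stmt_2 {A : Type*} [NormedRing A] [StarRing A] [CStarRing A]
    [NormedAlgebra ℂ A] [CompleteSpace A] [StarModule ℂ A]
    (τ : A →L[ℂ] ℂ) (hτ : ∀ x y : A, τ (x * y) = τ (y * x))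
    (hpos : ∀ x : A, 0 ≤ τ (star x * x))
    (hfaithful : ∀ x : A, τ (star x * x) = 0 → x = 0)
    (D : Fin 4 → A →L[ℂ] A)
    (hD : ∀ i, ∀ x y : A, D i (x * y) = D i x * y + x * D i y)
    (hτD : ∀ i, ∀ x : A, τ (D i x) = 0)
    (hDstar : ∀ i, ∀ x : A, D i (star x) = - star (D i x))
    (f : A) (hf : IsSelfAdjoint f) :
    (-(3/2 : ℂ) * ∑ i : Fin 4,
        τ (2 * D i (D i (NormedSpace.exp f) * NormedSpace.exp (-f)) * NormedSpace.exp f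
            + D i (NormedSpace.exp f) * NormedSpace.exp (-f) * D i (NormedSpace.exp f)) ≤ 0) ∧
    (-(3/2 : ℂ) * ∑ i : Fin 4,
        τ (2 * D i (D i (NormedSpace.exp f) * NormedSpace.exp (-f)) * NormedSpace.exp f
            + D i (NormedSpace.exp f) * NormedSpace.exp (-f) * D i (NormedSpace.exp f)) = 0
      ↔ ∀ i : Fin 4, D i (NormedSpace.exp f) = 0) :=
  stmt_2_general τ hpos hfaithful D hD hτD hDstar f hf
end

section
/- Let A be a unital C*-algebra, τ a continuous linear functional that is tracial, positive, and faithful, and ∂₁, ∂₂, ∂₃, ∂₄ continuous ℂ-linear τ-invariant derivations with ∂ᵢ(x*) = −(∂ᵢ(x))*. For self-adjoint f ∈ A define: R₁₂₁₂ := −½∂₁((∂₁e^f)e^{−f})e^f − ½∂₂((∂₂e^f)e^{−f})e^f − ¼(∂₃e^f)(∂₃e^f) − ¼(∂₄e^f)(∂₄e^f); R₁₃₁₃ := −½∂₃(∂₃(e^f)) + ¼(∂₃e^f)e^{−f}(∂₃e^f); R₁₄₁₄ := −½∂₄(∂₄(e^f)) + ¼(∂₄e^f)e^{−f}(∂₄e^f);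 R₃₁₃₁ := −½∂₃((∂₃e^f)e^{−f})e^f − ¼(∂₃e^f)e^{−f}(∂₃e^f); R₄₁₄₁ := −½∂₄((∂₄e^f)e^{−f})e^f − ¼(∂₄e^f)e^{−f}(∂₄e^f). Then the Einstein–Hilbert action EH := 2·τ( e^{−f}R₁₂₁₂ + R₁₄₁₄ + R₁₃₁₃ + R₃₁₃₁ + R₄₁₄₁ ) satisfies EH = ½ τ( (∂₃e^f)e^{−f}(∂₃e^f) + (∂₄e^f)e^{−f}(∂₄e^f) ), and EH is a nonpositive real number. -/
open NormedSpace ComplexOrder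

/-!
Only the two transverse directions `∂₃, ∂₄` survive in the trace. The longitudinal terms
`τ(e^{-f} ∂ᵢ((∂ᵢe^f)e^{-f}) e^f)` are, by cyclicity, traces of derivatives and vanish, and in
each transverse direction integration by parts turns `τ(∂(∂(e^f)e^{-f}) e^f)` into
`-τ((∂e^f) e^{-f} (∂e^f))`, so that everything collapses to `½ τ(Σ (∂e^f) e^{-f} (∂e^f))`.
Each of these summands is nonpositive: `∂e^f` is skew-adjoint and `e^{-f} = g* g` with
`g = e^{-f/2}`, so `(∂e^f) e^{-f} (∂e^f) = -(g ∂e^f)* (g ∂e^f)`.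
-/

def IsTracial {A B : Type*} [Mul A] (τ : A → B) : Prop :=
  ∀ x y : A, τ (x * y) = τ (y * x)

namespace IsTracial

variable {A B : Type*} {τ : A → B}

theorem apply_mul_mul_self [Semigroup A] (hτ : IsTracial τ) (v a : A) :
    τ (v * (a * a)) = τ (a * v * a) := by
  rw [hτ, mul_assoc, hτ]

theorem apply_mul_mul_eq_of_mul_eq_one [Monoid A] (hτ : IsTracial τ) {u v : A}
    (huv : u * v = 1) (x : A) : τ (v * (x * u)) = τ x := by
  rw [hτ, mul_assoc, huv, mul_one]

end IsTracial

section

variable {A B F : Type*} [Ring A] [AddCommGroup B] [FunLike F A B] [AddMonoidHomClass F A B]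

theorem map_derivation_mul_eq_neg {τ : F} {D : A → A}
    (hD : ∀ x y : A, D (x * y) = D x * y + x * D y) (hτD : ∀ x : A, τ (D x) = 0) (x y : A) :
    τ (D x * y) = -τ (x * D y) := by
  rw [eq_neg_iff_add_eq_zero, ← map_add, ← hD, hτD]

theorem star_apply_eq_neg_of_isSelfAdjoint [StarRing A] {D : A → A}
    (hD : ∀ x : A, D (star x) = -star (D x)) {e : A} (he : IsSelfAdjoint e) :
    star (D e) = -D e := by
  rw [← neg_neg (star (D e)), ← hD, he.star_eq]

theorem map_mul_star_mul_self_mul_nonpos [StarRing A] [PartialOrder B] [IsOrderedAddMonoid B]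
    {τ : F} (hpos : ∀ x : A, 0 ≤ τ (star x * x)) {a : A} (ha : star a = -a) (g : A) :
    τ (a * (star g * g) * a) ≤ 0 := by
  have hsq : a * (star g * g) * a = -(star (g * a) * (g * a)) := by
    rw [star_mul, ha]
    noncomm_ring
  rw [hsq, map_neg, neg_nonpos]
  exact hpos _

end

section

variable {A : Type*} [NormedRing A] [NormedAlgebra ℚ A] [CompleteSpace A]

theorem NormedSpace.exp_mul_exp_neg (x : A) : exp x * exp (-x) = 1 := by
  rw [← exp_add_of_commute (Commute.refl x).neg_right, add_neg_cancel, exp_zero]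

theorem IsSelfAdjoint.exp_eq_star_mul_self [StarRing A] [ContinuousStar A] {x : A}
    (hx : IsSelfAdjoint x) :
    NormedSpace.exp x =
      star (NormedSpace.exp ((2⁻¹ : ℚ) • x)) * NormedSpace.exp ((2⁻¹ : ℚ) • x) := by
  rw [star_exp, star_rat_smul, hx.star_eq, ← exp_add_of_commute (Commute.refl _), ← add_smul]
  norm_num

end

theorem stmt_3_general {A : Type*} [NormedRing A] [StarRing A] [CStarRing A]
    [NormedAlgebra ℂ A] [CompleteSpace A]
    (τ : A →L[ℂ] ℂ) (hτ : ∀ x y : A, τ (x * y) = τ (y * x))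
    (hpos : ∀ x : A, 0 ≤ τ (star x * x))
    (D₁ D₂ D₃ D₄ : A →L[ℂ] A)
    (hD₃ : ∀ x y : A, D₃ (x * y) = D₃ x * y + x * D₃ y)
    (hD₄ : ∀ x y : A, D₄ (x * y) = D₄ x * y + x * D₄ y)
    (hτD₁ : ∀ x : A, τ (D₁ x) = 0) (hτD₂ : ∀ x : A, τ (D₂ x) = 0)
    (hτD₃ : ∀ x : A, τ (D₃ x) = 0) (hτD₄ : ∀ x : A, τ (D₄ x) = 0)
    (hD₃star : ∀ x : A, D₃ (star x) = - star (D₃ x))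
    (hD₄star : ∀ x : A, D₄ (star x) = - star (D₄ x))
    (f : A) (hf : IsSelfAdjoint f) :
    let R₁₂₁₂ : A := -(1/2 : ℂ) • (D₁ (D₁ (exp f) * exp (-f)) * exp f)
      - (1/2 : ℂ) • (D₂ (D₂ (exp f) * exp (-f)) * exp f)
      - (1/4 : ℂ) • (D₃ (exp f) * D₃ (exp f))
      - (1/4 : ℂ) • (D₄ (exp f) * D₄ (exp f))
    let R₁₃₁₃ : A := -(1/2 : ℂ) • D₃ (D₃ (exp f))
      + (1/4 : ℂ) • (D₃ (exp f) * exp (-f) * D₃ (exp f))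
    let R₁₄₁₄ : A := -(1/2 : ℂ) • D₄ (D₄ (exp f))
      + (1/4 : ℂ) • (D₄ (exp f) * exp (-f) * D₄ (exp f))
    let R₃₁₃₁ : A := -(1/2 : ℂ) • (D₃ (D₃ (exp f) * exp (-f)) * exp f)
      - (1/4 : ℂ) • (D₃ (exp f) * exp (-f) * D₃ (exp f))
    let R₄₁₄₁ : A := -(1/2 : ℂ) • (D₄ (D₄ (exp f) * exp (-f)) * exp f)
      - (1/4 : ℂ) • (D₄ (exp f) * exp (-f) * D₄ (exp f))
    let EH : ℂ := 2 * τ (exp (-f) * R₁₂₁₂ + R₁₄₁₄ + R₁₃₁₃ + R₃₁₃₁ + R₄₁₄₁)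
    EH = (1/2 : ℂ) * τ (D₃ (exp f) * exp (-f) * D₃ (exp f)
          + D₄ (exp f) * exp (-f) * D₄ (exp f)) ∧
    EH ≤ 0 := by
  intro R₁₂₁₂ R₁₃₁₃ R₁₄₁₄ R₃₁₃₁ R₄₁₄₁ EH
  let +nondep : NormedAlgebra ℚ A := .restrictScalars ℚ ℂ A
  have hconj := IsTracial.apply_mul_mul_eq_of_mul_eq_one hτ (exp_mul_exp_neg f)
  have hibp (D : A →L[ℂ] A) (hD : ∀ x y : A, D (x * y) = D x * y + x * D y)
      (hτD : ∀ x : A, τ (D x) = 0) :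
      τ (D (D (exp f) * exp (-f)) * exp f) = -τ (D (exp f) * exp (-f) * D (exp f)) := by
    rw [map_derivation_mul_eq_neg hD hτD, mul_assoc]
  have hEH : EH = (1/2 : ℂ) * τ (D₃ (exp f) * exp (-f) * D₃ (exp f)
      + D₄ (exp f) * exp (-f) * D₄ (exp f)) := by
    simp only [EH, R₁₂₁₂, R₁₃₁₃, R₁₄₁₄, R₃₁₃₁, R₄₁₄₁, mul_sub, mul_add, mul_neg, mul_smul_comm,
      neg_smul, map_add, map_sub, map_neg, map_smul, smul_eq_mul]
    linear_combination -(hconj _).trans (hτD₁ _) - (hconj _).trans (hτD₂ _)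
      - (1/2 : ℂ) * IsTracial.apply_mul_mul_self hτ (exp (-f)) (D₃ (exp f))
      - (1/2 : ℂ) * IsTracial.apply_mul_mul_self hτ (exp (-f)) (D₄ (exp f))
      - hτD₃ _ - hτD₄ _ - hibp D₃ hD₃ hτD₃ - hibp D₄ hD₄ hτD₄
  have hnonpos (D : A →L[ℂ] A) (hD : ∀ x : A, D (star x) = -star (D x)) :
      τ (D (exp f) * exp (-f) * D (exp f)) ≤ 0 := by
    rw [hf.neg.exp_eq_star_mul_self]
    exact map_mul_star_mul_self_mul_nonpos hpos (star_apply_eq_neg_of_isSelfAdjoint hD hf.exp) _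
  refine ⟨hEH, hEH ▸ mul_nonpos_of_nonneg_of_nonpos (by positivity) ?_⟩
  rw [map_add]
  exact add_nonpos (hnonpos D₃ hD₃star) (hnonpos D₄ hD₄star)

/-- **Non-positivity of the Einstein–Hilbert action for the non-conformal diagonal metric
`diag(e^f, e^f, 1, 1)` on the noncommutative 4-torus.**  With the Riemann tensor
components `R₁₂₁₂, R₁₃₁₃, R₁₄₁₄, R₃₁₃₁, R₄₁₄₁` computed from the Levi-Civita connection,
the Einstein–Hilbert action `EH = 2τ(e^{−f}R₁₂₁₂ + R₁₄₁₄ + R₁₃₁₃ + R₃₁₃₁ + R₄₁₄₁)`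
equals `½τ((∂₃e^f)e^{−f}(∂₃e^f) + (∂₄e^f)e^{−f}(∂₄e^f))` and is a nonpositive real. -/
theorem stmt_3 {A : Type*} [NormedRing A] [StarRing A] [CStarRing A]
    [NormedAlgebra ℂ A] [CompleteSpace A] [StarModule ℂ A]
    (τ : A →L[ℂ] ℂ) (hτ : ∀ x y : A, τ (x * y) = τ (y * x))
    (hpos : ∀ x : A, 0 ≤ τ (star x * x))
    (hfaithful : ∀ x : A, τ (star x * x) = 0 → x = 0)
    (D₁ D₂ D₃ D₄ : A →L[ℂ] A)
    (hD₁ : ∀ x y : A, D₁ (x * y) = D₁ x * y + x * D₁ y)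
    (hD₂ : ∀ x y : A, D₂ (x * y) = D₂ x * y + x * D₂ y)
    (hD₃ : ∀ x y : A, D₃ (x * y) = D₃ x * y + x * D₃ y)
    (hD₄ : ∀ x y : A, D₄ (x * y) = D₄ x * y + x * D₄ y)
    (hτD₁ : ∀ x : A, τ (D₁ x) = 0) (hτD₂ : ∀ x : A, τ (D₂ x) = 0)
    (hτD₃ : ∀ x : A, τ (D₃ x) = 0) (hτD₄ : ∀ x : A, τ (D₄ x) = 0)
    (hD₁star : ∀ x : A, D₁ (star x) = - star (D₁ x))
    (hD₂star : ∀ x : A, D₂ (star x) = - star (D₂ x))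
    (hD₃star : ∀ x : A, D₃ (star x) = - star (D₃ x))
    (hD₄star : ∀ x : A, D₄ (star x) = - star (D₄ x))
    (f : A) (hf : IsSelfAdjoint f) :
    let R₁₂₁₂ : A := -(1/2 : ℂ) • (D₁ (D₁ (exp f) * exp (-f)) * exp f)
      - (1/2 : ℂ) • (D₂ (D₂ (exp f) * exp (-f)) * exp f)
      - (1/4 : ℂ) • (D₃ (exp f) * D₃ (exp f))
      - (1/4 : ℂ) • (D₄ (exp f) * D₄ (exp f))
    let R₁₃₁₃ : A := -(1/2 : ℂ) • D₃ (D₃ (exp f))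
      + (1/4 : ℂ) • (D₃ (exp f) * exp (-f) * D₃ (exp f))
    let R₁₄₁₄ : A := -(1/2 : ℂ) • D₄ (D₄ (exp f))
      + (1/4 : ℂ) • (D₄ (exp f) * exp (-f) * D₄ (exp f))
    let R₃₁₃₁ : A := -(1/2 : ℂ) • (D₃ (D₃ (exp f) * exp (-f)) * exp f)
      - (1/4 : ℂ) • (D₃ (exp f) * exp (-f) * D₃ (exp f))
    let R₄₁₄₁ : A := -(1/2 : ℂ) • (D₄ (D₄ (exp f) * exp (-f)) * exp f)
      - (1/4 : ℂ) • (D₄ (exp f) * exp (-f) * D₄ (exp f))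
    let EH : ℂ := 2 * τ (exp (-f) * R₁₂₁₂ + R₁₄₁₄ + R₁₃₁₃ + R₃₁₃₁ + R₄₁₄₁)
    EH = (1/2 : ℂ) * τ (D₃ (exp f) * exp (-f) * D₃ (exp f)
          + D₄ (exp f) * exp (-f) * D₄ (exp f)) ∧
    EH ≤ 0 :=
  stmt_3_general τ hτ hpos D₁ D₂ D₃ D₄ hD₃ hD₄ hτD₁ hτD₂ hτD₃ hτD₄ hD₃star hD₄star f hf
end

section
/- Let A be a unital Banach algebra over ℂ, τ : A → ℂ a continuous linear tracial functional (τ(xy) = τ(yx)), and δ : A → A a continuous ℂ-linear τ-invariant derivation (τ(δ(x)) = 0 for all x). Then for every invertible element a ∈ A: τ( a⁻²·δ(δ(a)) ) = 2·τ( a⁻²·δ(a)·a⁻¹·δ(a) ). -/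
/-- **Key integration-by-parts identity for the Fathizadeh–Khalkhali curvature.**
In a unital complex Banach algebra with a continuous tracial linear functional `τ` and a
continuous `τ`-invariant derivation `δ`, every invertible `a` satisfies
`τ(a⁻²·δ(δa)) = 2·τ(a⁻²·δ(a)·a⁻¹·δ(a))`. -/
theorem stmt_5 {A : Type*} [NormedRing A] [NormedAlgebra ℂ A] [CompleteSpace A]
    (τ : A →L[ℂ] ℂ) (hτ : ∀ x y : A, τ (x * y) = τ (y * x))
    (δ : A →L[ℂ] A) (hδ : ∀ x y : A, δ (x * y) = δ x * y + x * δ y)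
    (hτδ : ∀ x : A, τ (δ x) = 0)
    (a : Aˣ) :
    τ (((a⁻¹ : Aˣ) : A) * ((a⁻¹ : Aˣ) : A) * δ (δ (a : A))) =
      2 * τ (((a⁻¹ : Aˣ) : A) * ((a⁻¹ : Aˣ) : A) * δ (a : A) * ((a⁻¹ : Aˣ) : A) * δ (a : A)) := by
  set b : A := ((a⁻¹ : Aˣ) : A) with hb
  have hab : (a : A) * b = 1 := a.mul_inv
  have hba : b * (a : A) = 1 := a.inv_mul
  have h1 : δ (1 : A) = 0 := by
    have h := hδ 1 1
    simpa using h
  have hdb : δ b = -(b * δ (a : A) * b) := by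
    have h := hδ (a : A) b
    rw [hab, h1] at h
    have h2 : (a : A) * δ b = -(δ (a : A) * b) :=
      (neg_eq_of_add_eq_zero_right h.symm).symm
    calc δ b = (b * (a : A)) * δ b := by rw [hba, one_mul]
    _ = b * ((a : A) * δ b) := mul_assoc _ _ _
    _ = b * -(δ (a : A) * b) := by rw [h2]
    _ = -(b * δ (a : A) * b) := by rw [mul_neg, mul_assoc]
  have key := hτδ (b * b * δ (a : A))
  rw [hδ (b * b) (δ (a : A)), hδ b b, hdb, map_add] at key
  have e1 : (-(b * δ (a : A) * b) * b + b * -(b * δ (a : A) * b)) * δ (a : A)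
      = -((b * δ (a : A)) * ((b * b) * δ (a : A)))
        + -((b * b * δ (a : A)) * (b * δ (a : A))) := by noncomm_ring
  rw [e1, map_add, map_neg, map_neg, hτ (b * δ (a : A)) ((b * b) * δ (a : A))] at key
  rw [show b * b * δ (a : A) * b * δ (a : A)
      = (b * b * δ (a : A)) * (b * δ (a : A)) from by rw [mul_assoc]]
  linear_combination key
end

section
/- Let A be a unital Banach algebra over ℂ, let v be an invertible element of A, and let φ : A → ℂ be a continuous linear functional such that φ(vⁿ) = 0 for every integer n ≠ 0 (both positive and negative powers). Then φ( exp(v + v⁻¹) · (2·1 − v − v⁻¹ − v² − v⁻²) ) = 0. -/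
/-!
Put `a = v + v⁻¹`; the second factor is `4 - a - a²`. By the binomial theorem and the hypothesis
on `φ`, the moments `mₙ = φ(aⁿ)` are `m₂ⱼ = C(2j, j) φ(1)` and `m₂ⱼ₊₁ = 0`, hence
`(n + 2) mₙ₊₂ = 4 (n + 1) mₙ`. This recurrence turns the `n`-th term `(4mₙ - mₙ₊₁ - mₙ₊₂) / n!` of
`φ(exp a · (4 - a - a²))` into `mₙ₊₂ / (n + 1)! - mₙ₊₁ / n!`, so the series telescopes to
`-m₁ = -φ(v) - φ(v⁻¹) = 0`. On the commutative torus this is the fact that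
`e^{2 cos θ} (4 - 2 cos θ - 4 cos² θ)` is the derivative of `-2 e^{2 cos θ} sin θ`.
-/

open NormedSpace Finset Filter Topology

theorem Units.coe_add_coe_inv_pow {A : Type*} [Ring A] (v : Aˣ) (n : ℕ) :
    ((v : A) + ((v⁻¹ : Aˣ) : A)) ^ n =
      ∑ k ∈ range (n + 1), n.choose k • ((v ^ (2 * (k : ℤ) - n) : Aˣ) : A) := by
  rw [v.commute_coe_inv.add_pow]
  refine sum_congr rfl fun k hk => ?_
  have hkn : k ≤ n := mem_range_succ_iff.mp hk
  have hexp : 2 * (k : ℤ) - n = k + -((n - k : ℕ) : ℤ) := by push_cast [hkn]; ring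
  rw [hexp, zpow_add, zpow_neg, zpow_natCast, zpow_natCast, Units.val_mul, ← inv_pow,
    Units.val_pow_eq_pow_val, Units.val_pow_eq_pow_val, nsmul_eq_mul']

section Moments

variable {A M F : Type*} [Ring A] [AddCommMonoid M] [FunLike F A M] [AddMonoidHomClass F A M]
  (v : Aˣ) {φ : F} (hφ : ∀ n : ℤ, n ≠ 0 → φ ((v ^ n : Aˣ) : A) = 0)
include hφ

theorem map_coe_add_coe_inv_pow_two_mul (j : ℕ) :
    φ (((v : A) + ((v⁻¹ : Aˣ) : A)) ^ (2 * j)) = Nat.centralBinom j • φ 1 := by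
  rw [v.coe_add_coe_inv_pow, map_sum, sum_eq_single j]
  · rw [map_nsmul, Nat.centralBinom_eq_two_mul_choose]
    simp
  · intro k _ hkj
    rw [map_nsmul, hφ _ (by omega), smul_zero]
  · intro hj
    exact absurd (mem_range_succ_iff.mpr (by omega)) hj

theorem map_coe_add_coe_inv_pow_two_mul_add_one (j : ℕ) :
    φ (((v : A) + ((v⁻¹ : Aˣ) : A)) ^ (2 * j + 1)) = 0 := by
  rw [v.coe_add_coe_inv_pow, map_sum]
  exact sum_eq_zero fun k _ => by rw [map_nsmul, hφ _ (by omega), smul_zero]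

theorem map_coe_add_coe_inv_pow_add_two (n : ℕ) :
    (n + 2) • φ (((v : A) + ((v⁻¹ : Aˣ) : A)) ^ (n + 2)) =
      (4 * (n + 1)) • φ (((v : A) + ((v⁻¹ : Aˣ) : A)) ^ n) := by
  obtain ⟨j, rfl | rfl⟩ := n.even_or_odd'
  · rw [show 2 * j + 2 = 2 * (j + 1) by ring, map_coe_add_coe_inv_pow_two_mul v hφ,
      map_coe_add_coe_inv_pow_two_mul v hφ, smul_smul, smul_smul]
    congr 1
    linear_combination 2 * Nat.succ_mul_centralBinom_succ j
  · rw [show 2 * j + 1 + 2 = 2 * (j + 1) + 1 by ring,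
      map_coe_add_coe_inv_pow_two_mul_add_one v hφ,
      map_coe_add_coe_inv_pow_two_mul_add_one v hφ, smul_zero, smul_zero]

end Moments

theorem map_inv_factorial_smul_pow_mul_four_sub_sub_sq {𝕜 A F : Type*} [Field 𝕜] [CharZero 𝕜]
    [Ring A] [Algebra 𝕜 A] [FunLike F A 𝕜] [LinearMapClass F 𝕜 A 𝕜] {φ : F} {a : A}
    (h : ∀ n : ℕ, (n + 2) • φ (a ^ (n + 2)) = (4 * (n + 1)) • φ (a ^ n)) (n : ℕ) :
    φ ((n.factorial : 𝕜)⁻¹ • a ^ n * (4 - a - a ^ 2)) =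
      φ (((n + 1).factorial : 𝕜)⁻¹ • a ^ (n + 1) * a) -
        φ ((n.factorial : 𝕜)⁻¹ • a ^ n * a) := by
  have hrec := h n
  simp only [nsmul_eq_mul] at hrec
  push_cast at hrec
  have h4 : a ^ n * 4 = (4 : 𝕜) • a ^ n := by
    rw [ofNat_smul_eq_nsmul (R := 𝕜), nsmul_eq_mul', Nat.cast_ofNat]
  simp only [smul_mul_assoc, mul_sub, h4, ← pow_succ, ← pow_add, map_smul, map_sub, smul_eq_mul,
    Nat.factorial_succ, Nat.cast_mul]
  have hn : (n.factorial : 𝕜) ≠ 0 := Nat.cast_ne_zero.mpr n.factorial_ne_zero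
  field_simp
  push_cast
  linear_combination -hrec

theorem HasSum.eq_neg_of_tendsto_zero {G : Type*} [AddCommGroup G] [TopologicalSpace G]
    [IsTopologicalAddGroup G] [T2Space G] {e : ℕ → G} {s : G}
    (hs : HasSum (fun n => e (n + 1) - e n) s) (he : Tendsto e atTop (𝓝 0)) : s = -e 0 := by
  have hpartial := hs.tendsto_sum_nat
  simp only [sum_range_sub] at hpartial
  exact tendsto_nhds_unique hpartial (by simpa using he.sub_const (e 0))

theorem map_exp_mul_four_sub_sub_sq {𝕜 A : Type*} [RCLike 𝕜] [NormedRing A] [NormedAlgebra 𝕜 A]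
    [CompleteSpace A] (φ : A →L[𝕜] 𝕜) {a : A}
    (h : ∀ n : ℕ, (n + 2) • φ (a ^ (n + 2)) = (4 * (n + 1)) • φ (a ^ n)) :
    φ (exp a * (4 - a - a ^ 2)) = -φ a := by
  have hsum (x : A) :
      HasSum (fun n => φ ((n.factorial : 𝕜)⁻¹ • a ^ n * x)) (φ (exp a * x)) :=
    ((exp_series_hasSum_exp' a).mul_right x).mapL φ
  have htelescope := hsum (4 - a - a ^ 2)
  rw [funext (map_inv_factorial_smul_pow_mul_four_sub_sub_sq h)] at htelescope
  simpa using HasSum.eq_neg_of_tendsto_zero (e := fun n => φ ((n.factorial : 𝕜)⁻¹ • a ^ n * a))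
    htelescope (hsum a).summable.tendsto_atTop_zero

/-- **Abstract Gauss–Bonnet identity for the conformal factor `f = 2(V + V⁻¹)`.**
If `φ` is a continuous linear functional on a unital complex Banach algebra vanishing on
all nonzero integer powers of an invertible `v`, then
`φ(exp(v + v⁻¹)·(2·1 − v − v⁻¹ − v² − v⁻²)) = 0`. -/
theorem stmt_7 {A : Type*} [NormedRing A] [NormedAlgebra ℂ A] [CompleteSpace A]
    (v : Aˣ) (φ : A →L[ℂ] ℂ)
    (hφ : ∀ n : ℤ, n ≠ 0 → φ ((v ^ n : Aˣ) : A) = 0) :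
    φ (exp ((v : A) + ((v⁻¹ : Aˣ) : A)) *
        (2 • (1 : A) - (v : A) - ((v⁻¹ : Aˣ) : A)
          - (v : A) ^ 2 - ((v⁻¹ : Aˣ) : A) ^ 2)) = 0 := by
  set a : A := (v : A) + ((v⁻¹ : Aˣ) : A)
  have hb : 2 • (1 : A) - (v : A) - ((v⁻¹ : Aˣ) : A) - (v : A) ^ 2 - ((v⁻¹ : Aˣ) : A) ^ 2 =
      4 - a - a ^ 2 := by
    simp only [a, sq, add_mul, mul_add, Units.mul_inv, Units.inv_mul, nsmul_eq_mul,
      Nat.cast_ofNat, mul_one]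
    rw [show (4 : A) = 2 + 1 + 1 by norm_num]
    abel
  have hv : φ v = 0 := by simpa using hφ 1 one_ne_zero
  have hv_inv : φ ((v⁻¹ : Aˣ) : A) = 0 := by simpa using hφ (-1) (by norm_num)
  rw [hb, map_exp_mul_four_sub_sub_sq φ (map_coe_add_coe_inv_pow_add_two v hφ), map_add, hv,
    hv_inv, add_zero, neg_zero]
end

section
/- The series Σ_{q=0}^{∞} (q² + 2q − 1) / ( q! · (q+2)! ) converges to 0 (where q! denotes the factorial of the natural number q). -/
private noncomputable def gbD (q : ℕ) : ℝ :=
  1 / ((q.factorial : ℝ) * ((q + 2).factorial : ℝ))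

private lemma gbD_pos (q : ℕ) : 0 < gbD q := by
  unfold gbD
  positivity

private noncomputable def gbA (q : ℕ) : ℝ :=
  ((q : ℝ) ^ 2 + 2 * (q : ℝ) - 1) / ((q.factorial : ℝ) * ((q + 2).factorial : ℝ))

private lemma gbA_zero : gbA 0 = -gbD 0 := by
  simp [gbA, gbD, Nat.factorial]
  norm_num

private lemma gbA_succ (q : ℕ) : gbA (q + 1) = gbD q - gbD (q + 1) := by
  have h1 : (q + 1 + 2) = (q + 2 + 1) := by ring
  unfold gbA gbD
  rw [h1, Nat.factorial_succ (q + 2), Nat.factorial_succ (q + 1), Nat.factorial_succ q]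
  have hq : ((q.factorial : ℝ)) ≠ 0 := by positivity
  have hq2 : (((q + 2).factorial : ℝ)) ≠ 0 := by positivity
  push_cast
  field_simp
  ring

private lemma gbD_le (q : ℕ) : gbD q ≤ 1 / (q + 1 : ℝ) := by
  unfold gbD
  have h1 : (q + 1 : ℝ) ≤ (q.factorial : ℝ) * ((q + 2).factorial : ℝ) := by
    have hf : 1 ≤ q.factorial := Nat.one_le_iff_ne_zero.mpr q.factorial_pos.ne'
    have hf2 : q + 1 ≤ (q + 2).factorial := by
      calc q + 1 ≤ q + 2 := by omega
        _ ≤ (q + 2).factorial := Nat.self_le_factorial _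
    have : q + 1 ≤ q.factorial * (q + 2).factorial :=
      le_trans hf2 (Nat.le_mul_of_pos_left _ q.factorial_pos)
    exact_mod_cast this
  have hpos : (0 : ℝ) < q + 1 := by positivity
  exact one_div_le_one_div_of_le hpos h1

private lemma gbD_tendsto : Filter.Tendsto gbD Filter.atTop (nhds 0) := by
  apply squeeze_zero (fun n => (gbD_pos n).le) gbD_le
  exact tendsto_one_div_add_atTop_nhds_zero_nat

private lemma gbA_summable : Summable gbA := by
  rw [← summable_nat_add_iff 1]
  have h : (fun n => gbA (n + 1)) = fun n => gbD n - gbD (n + 1) := by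
    funext n; exact gbA_succ n
  rw [h]
  apply summable_of_sum_range_le (c := gbD 0)
  · intro n
    have := (gbD_pos (n + 1)).le
    have h2 : gbD (n + 1) ≤ gbD n := by
      have := gbA_succ n
      have h3 : 0 ≤ gbA (n + 1) := by
        unfold gbA
        apply div_nonneg
        · push_cast; nlinarith [sq_nonneg ((n:ℝ))]
        · positivity
      linarith
    linarith
  · intro n
    rw [Finset.sum_range_sub' gbD n]
    have := (gbD_pos n).le
    linarith

/-- **The Gauss–Bonnet series.**  The series
`Σ_{q=0}^∞ (q² + 2q − 1)/(q!·(q+2)!)` converges to `0`. -/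
theorem stmt_8 :
    HasSum (fun q : ℕ =>
      ((q : ℝ) ^ 2 + 2 * (q : ℝ) - 1) / ((q.factorial : ℝ) * ((q + 2).factorial : ℝ)))
      0 := by
  have hsum : Summable gbA := gbA_summable
  rw [show (fun q : ℕ =>
      ((q : ℝ) ^ 2 + 2 * (q : ℝ) - 1) / ((q.factorial : ℝ) * ((q + 2).factorial : ℝ))) = gbA
    from rfl]
  rw [hsum.hasSum_iff_tendsto_nat]
  have key : ∀ n, ∑ q ∈ Finset.range (n + 1), gbA q = -gbD n := by
    intro n
    rw [Finset.sum_range_succ']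
    have : ∀ q ∈ Finset.range n, gbA (q + 1) = gbD q - gbD (q + 1) := fun q _ => gbA_succ q
    rw [Finset.sum_congr rfl this, Finset.sum_range_sub' gbD n, gbA_zero]
    ring
  rw [← Filter.tendsto_add_atTop_iff_nat 1]
  simp only [key]
  simpa using gbD_tendsto.neg
end

section
/- Let A be a unital associative ℂ-algebra, λ ∈ ℂ nonzero, and U, V invertible elements of A with U·V = λ·V·U. Let m, n, k, l be integers with k·n = m·l and let a, b ∈ ℂ. Set w₁ := Uᵐ·Vⁿ and w₂ := Uᵏ·Vˡ (integer powers of invertible elements), f := a·w₁ + ā·w₁⁻¹ + b·w₂ + b̄·w₂⁻¹, and define δ₁f := m·a·w₁ − m·ā·w₁⁻¹ + k·b·w₂ − k·b̄·w₂⁻¹ and δ₂f := n·a·w₁ − n·ā·w₁⁻¹ + l·b·w₂ − l·b̄·w₂⁻¹. Then f commutes with both δ₁f and δ₂f: f·(δ₁f) = (δ₁f)·f and f·(δ₂f) = (δ₂f)·f. -/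
private lemma aux_zpow_comm {G : Type*} [Group G] {c u v : G}
    (hc : ∀ x : G, Commute c x) (h : u * v = c * (v * u)) (p q : ℤ) :
    u ^ p * v ^ q = c ^ (p * q) * (v ^ q * u ^ p) := by
  have h1 : SemiconjBy u v (c * v) := by
    show u * v = c * v * u
    rw [h, mul_assoc]
  have h1q : ∀ q : ℤ, u * v ^ q = c ^ q * (v ^ q * u) := by
    intro q
    have h2 := h1.zpow_right q
    rw [(hc v).mul_zpow] at h2
    show u * v ^ q = c ^ q * (v ^ q * u)
    rw [h2]
    group
  have h2 : SemiconjBy (v ^ q) u (c ^ (-q) * u) := by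
    show v ^ q * u = c ^ (-q) * u * v ^ q
    rw [mul_assoc, h1q q]
    group
  have h3 := h2.zpow_right p
  rw [((hc u).zpow_left (-q)).mul_zpow] at h3
  rw [h3]
  group

private lemma aux_words_comm {G : Type*} [Group G] {c u v : G}
    (hc : ∀ x : G, Commute c x) (h : u * v = c * (v * u)) {m n k l : ℤ}
    (hcond : k * n = m * l) :
    Commute (u ^ m * v ^ n) (u ^ k * v ^ l) := by
  have inv_key : ∀ p q : ℤ, v ^ q * u ^ p = c ^ (-(p * q)) * (u ^ p * v ^ q) := by
    intro p q
    rw [aux_zpow_comm hc h p q]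
    group
  show u ^ m * v ^ n * (u ^ k * v ^ l) = u ^ k * v ^ l * (u ^ m * v ^ n)
  have hm1 : u ^ m * c ^ (-(k * n)) = c ^ (-(k * n)) * u ^ m :=
    ((hc (u ^ m)).zpow_left (-(k * n))).symm.eq
  have hm2 : u ^ k * c ^ (-(m * l)) = c ^ (-(m * l)) * u ^ k :=
    ((hc (u ^ k)).zpow_left (-(m * l))).symm.eq
  have e1 : u ^ m * v ^ n * (u ^ k * v ^ l) = c ^ (-(k * n)) * (u ^ (m + k) * v ^ (n + l)) := by
    calc u ^ m * v ^ n * (u ^ k * v ^ l)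
        = u ^ m * (v ^ n * u ^ k) * v ^ l := by group
      _ = u ^ m * (c ^ (-(k * n)) * (u ^ k * v ^ n)) * v ^ l := by rw [inv_key k n]
      _ = (u ^ m * c ^ (-(k * n))) * ((u ^ k * v ^ n) * v ^ l) := by group
      _ = (c ^ (-(k * n)) * u ^ m) * ((u ^ k * v ^ n) * v ^ l) := by rw [hm1]
      _ = c ^ (-(k * n)) * (u ^ (m + k) * v ^ (n + l)) := by group
  have e2 : u ^ k * v ^ l * (u ^ m * v ^ n) = c ^ (-(m * l)) * (u ^ (m + k) * v ^ (n + l)) := by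
    calc u ^ k * v ^ l * (u ^ m * v ^ n)
        = u ^ k * (v ^ l * u ^ m) * v ^ n := by group
      _ = u ^ k * (c ^ (-(m * l)) * (u ^ m * v ^ l)) * v ^ n := by rw [inv_key m l]
      _ = (u ^ k * c ^ (-(m * l))) * ((u ^ m * v ^ l) * v ^ n) := by group
      _ = (c ^ (-(m * l)) * u ^ k) * ((u ^ m * v ^ l) * v ^ n) := by rw [hm2]
      _ = c ^ (-(m * l)) * (u ^ (m + k) * v ^ (n + l)) := by group
  rw [e1, e2, hcond]

/-- **Self-adjoint elements commuting with their partial derivatives.**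
In a unital associative `ℂ`-algebra with invertibles `U, V` satisfying `UV = λVU` (`λ ≠ 0`),
for integers `m, n, k, l` with `kn = ml` the element
`f = a·UᵐVⁿ + ā·(UᵐVⁿ)⁻¹ + b·UᵏVˡ + b̄·(UᵏVˡ)⁻¹` commutes with its canonical partial
derivatives `δ₁f` and `δ₂f`. -/
theorem stmt_9 {A : Type*} [Ring A] [Algebra ℂ A]
    (lam : ℂ) (hlam : lam ≠ 0) (U V : Aˣ)
    (hUV : (U : A) * (V : A) = lam • ((V : A) * (U : A)))
    (m n k l : ℤ) (hcond : k * n = m * l) (a b : ℂ) :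
    let w₁ : Aˣ := U ^ m * V ^ n
    let w₂ : Aˣ := U ^ k * V ^ l
    let f : A := a • (w₁ : A) + (starRingEnd ℂ) a • ((w₁⁻¹ : Aˣ) : A)
      + b • (w₂ : A) + (starRingEnd ℂ) b • ((w₂⁻¹ : Aˣ) : A)
    let δ₁f : A := ((m : ℂ) * a) • (w₁ : A) - ((m : ℂ) * (starRingEnd ℂ) a) • ((w₁⁻¹ : Aˣ) : A)
      + ((k : ℂ) * b) • (w₂ : A) - ((k : ℂ) * (starRingEnd ℂ) b) • ((w₂⁻¹ : Aˣ) : A)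
    let δ₂f : A := ((n : ℂ) * a) • (w₁ : A) - ((n : ℂ) * (starRingEnd ℂ) a) • ((w₁⁻¹ : Aˣ) : A)
      + ((l : ℂ) * b) • (w₂ : A) - ((l : ℂ) * (starRingEnd ℂ) b) • ((w₂⁻¹ : Aˣ) : A)
    f * δ₁f = δ₁f * f ∧ f * δ₂f = δ₂f * f := by
  intro w₁ w₂ f δ₁f δ₂f
  -- the central unit corresponding to `lam`
  set cA : Aˣ := Units.map (algebraMap ℂ A : ℂ →* A) (Units.mk0 lam hlam) with hcA
  have hcAval : (cA : A) = algebraMap ℂ A lam := rfl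
  have hcC : ∀ x : Aˣ, Commute cA x := by
    intro x
    apply Units.ext
    show ((cA * x : Aˣ) : A) = ((x * cA : Aˣ) : A)
    rw [Units.val_mul, Units.val_mul, hcAval]
    exact Algebra.commutes lam (x : A)
  have huv : U * V = cA * (V * U) := by
    apply Units.ext
    show ((U * V : Aˣ) : A) = ((cA * (V * U) : Aˣ) : A)
    rw [Units.val_mul, Units.val_mul, Units.val_mul, hcAval, hUV, Algebra.smul_def]
  have hww : Commute w₁ w₂ := aux_words_comm hcC huv hcond
  have c12 : Commute (w₁ : A) (w₂ : A) := by
    have h := congrArg (Units.val) hww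
    rw [Units.val_mul, Units.val_mul] at h
    exact h
  have c12' : Commute (w₁ : A) ((w₂⁻¹ : Aˣ) : A) := c12.units_inv_right
  have c1'2 : Commute ((w₁⁻¹ : Aˣ) : A) (w₂ : A) := c12.units_inv_left
  have c1'2' : Commute ((w₁⁻¹ : Aˣ) : A) ((w₂⁻¹ : Aˣ) : A) := c12'.units_inv_left
  have c11' : Commute (w₁ : A) ((w₁⁻¹ : Aˣ) : A) := (Commute.refl _).units_inv_right
  have c22' : Commute (w₂ : A) ((w₂⁻¹ : Aˣ) : A) := (Commute.refl _).units_inv_right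
  have hf : ∀ (t : ℂ) (x : A), Commute (w₁ : A) x → Commute ((w₁⁻¹ : Aˣ) : A) x →
      Commute (w₂ : A) x → Commute ((w₂⁻¹ : Aˣ) : A) x → Commute f (t • x) := by
    intro t x h1 h1' h2 h2'
    have hfx : Commute f x :=
      (((h1.smul_left a).add_left (h1'.smul_left _)).add_left (h2.smul_left b)).add_left
        (h2'.smul_left _)
    exact hfx.smul_right t
  have main : ∀ (p q r s : ℂ),
      Commute f (p • (w₁ : A) - q • ((w₁⁻¹ : Aˣ) : A) + r • (w₂ : A)
        - s • ((w₂⁻¹ : Aˣ) : A)) := by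
    intro p q r s
    exact (((hf p _ (Commute.refl _) c11'.symm c12.symm c12'.symm).sub_right
      (hf q _ c11' (Commute.refl _) c1'2.symm c1'2'.symm)).add_right
      (hf r _ c12 c1'2 (Commute.refl _) c22'.symm)).sub_right
      (hf s _ c12' c1'2' c22' (Commute.refl _))
  exact ⟨main _ _ _ _, main _ _ _ _⟩
end

section
/- The integral over the unit circle (traversed counterclockwise) of the function z ↦ exp(z + z⁻¹)·(2 − z − z⁻¹ − z² − z⁻²)·z⁻¹ is equal to 0; that is, ∮_{|z|=1} e^{z+1/z} (2 − z − 1/z − z² − 1/z²) (1/z) dz = 0. -/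
/-- **Vanishing of the Gauss–Bonnet contour integral.**
`∮_{|z|=1} e^{z+1/z}·(2 − z − 1/z − z² − 1/z²)·(1/z) dz = 0`. -/
theorem stmt_10 :
    (∮ z in C(0, 1), Complex.exp (z + z⁻¹) *
      (2 - z - z⁻¹ - z ^ 2 - z⁻¹ ^ 2) * z⁻¹) = 0 := by
  apply circleIntegral.integral_eq_zero_of_hasDerivWithinAt
    (f := fun z => Complex.exp (z + z⁻¹) * (z⁻¹ - z)) zero_le_one
  intro z hz
  have hz0 : z ≠ 0 := by
    intro h
    simp [h] at hz
  have h1 : HasDerivAt (fun z : ℂ => Complex.exp (z + z⁻¹) * (z⁻¹ - z))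
      (Complex.exp (z + z⁻¹) * (1 + (-(z ^ 2)⁻¹)) * (z⁻¹ - z)
        + Complex.exp (z + z⁻¹) * (-(z ^ 2)⁻¹ - 1)) z := by
    have hd : HasDerivAt (fun z : ℂ => z + z⁻¹) (1 + (-(z ^ 2)⁻¹)) z :=
      (hasDerivAt_id z).add (hasDerivAt_inv hz0)
    exact (hd.cexp.mul ((hasDerivAt_inv hz0).sub (hasDerivAt_id z)))
  have heq : Complex.exp (z + z⁻¹) * (1 + (-(z ^ 2)⁻¹)) * (z⁻¹ - z)
        + Complex.exp (z + z⁻¹) * (-(z ^ 2)⁻¹ - 1)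
      = Complex.exp (z + z⁻¹) * (2 - z - z⁻¹ - z ^ 2 - z⁻¹ ^ 2) * z⁻¹ := by
    field_simp
    ring
  exact (heq ▸ h1).hasDerivWithinAt
end

section
/- Let A be a unital C*-algebra, τ : A → ℂ a continuous linear tracial functional (τ(xy) = τ(yx)), and ∂ : A → A a continuous ℂ-linear τ-invariant derivation (τ(∂(x)) = 0). Let f ∈ A be self-adjoint and suppose f commutes with its derivative: f·∂(f) = ∂(f)·f. Then τ( e^{f/2} · ( ∂(∂(f)) + ½·(∂f)·(∂f) ) ) = 0. Consequently the Gauss–Bonnet theorem τ(R·√det g) = τ(R·e^{f/2}) = 0 holds for the metric diag(e^f, 1) on the noncommutative two-torus with scalar curvature R = −∂₂²f − ½(∂₂f)². -/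
/-!
The integrand is a total derivative: since `f` commutes with `∂f`, the Leibniz rule applied
term by term to the exponential series gives `∂(e^{f/2}) = ½ e^{f/2} ∂f`, hence
`∂(e^{f/2} ∂f) = e^{f/2} (∂²f + ½ (∂f)²)`, and `τ ∘ ∂ = 0`.
-/

open NormedSpace

namespace ContinuousLinearMap

variable {𝕂 A : Type*} [RCLike 𝕂] [NormedRing A] [NormedAlgebra 𝕂 A]
  (D : A →L[𝕂] A) (hD : ∀ x y : A, D (x * y) = D x * y + x * D y)
include hD

theorem map_one_eq_zero_of_leibniz : D 1 = 0 := by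
  simpa using hD 1 1

theorem map_pow_succ_of_commute {x : A} (hx : Commute x (D x)) (n : ℕ) :
    D (x ^ (n + 1)) = (n + 1) • (x ^ n * D x) := by
  induction n with
  | zero => simp
  | succ n ih =>
    have hshift : x ^ n * D x * x = x ^ (n + 1) * D x := by
      rw [mul_assoc, ← hx.eq, ← mul_assoc, ← pow_succ]
    rw [pow_succ x (n + 1), hD, ih, smul_mul_assoc, hshift, succ_nsmul _ (n + 1)]

theorem map_exp_of_commute [CompleteSpace A] {x : A} (hx : Commute x (D x)) :
    D (exp x) = exp x * D x := by
  have hsum : Summable fun n : ℕ => (n.factorial⁻¹ : 𝕂) • x ^ n := expSeries_summable' x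
  have hterm (n : ℕ) : D (((n + 1).factorial⁻¹ : 𝕂) • x ^ (n + 1))
      = ((n.factorial⁻¹ : 𝕂) • x ^ n) * D x := by
    rw [map_smul, map_pow_succ_of_commute D hD hx, ← Nat.cast_smul_eq_nsmul 𝕂, smul_smul,
      smul_mul_assoc]
    congr 1
    push_cast [Nat.factorial_succ]
    field_simp
  have hsumD : Summable fun n : ℕ => D ((n.factorial⁻¹ : 𝕂) • x ^ n) := hsum.map D D.continuous
  rw [exp_eq_tsum 𝕂]
  beta_reduce
  rw [D.map_tsum hsum, hsumD.tsum_eq_zero_add, pow_zero, map_smul, map_one_eq_zero_of_leibniz D hD, smul_zero, zero_add, tsum_congr hterm,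
    hsum.tsum_mul_right]

theorem map_exp_smul_mul_map_of_commute [CompleteSpace A] {f : A} (hf : Commute f (D f))
    (c : 𝕂) : D (exp (c • f) * D f) = exp (c • f) * (D (D f) + c • (D f * D f)) := by
  have hcf : Commute (c • f) (D (c • f)) := by
    rw [map_smul]
    exact (hf.smul_left c).smul_right c
  rw [hD, map_exp_of_commute D hD hcf, map_smul, mul_assoc, smul_mul_assoc, mul_add, add_comm]

end ContinuousLinearMap

theorem stmt_12_general {A : Type*} [NormedRing A]
    [NormedAlgebra ℂ A] [CompleteSpace A]
    (τ : A →L[ℂ] ℂ)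
    (D : A →L[ℂ] A) (hD : ∀ x y : A, D (x * y) = D x * y + x * D y)
    (hτD : ∀ x : A, τ (D x) = 0)
    (f : A) (hcomm : f * D f = D f * f) :
    τ (exp ((1/2 : ℂ) • f) * (D (D f) + (1/2 : ℂ) • (D f * D f))) = 0 := by
  rw [← D.map_exp_smul_mul_map_of_commute hD hcomm]
  exact hτD _

/-- **Gauss–Bonnet for the metric `diag(e^f, 1)` when `f` commutes with its derivative.**
For a unital C*-algebra with continuous tracial linear functional `τ` and a continuous
`τ`-invariant derivation `∂`, if the self-adjoint element `f` commutes with `∂f`, then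
`τ(e^{f/2}·(∂²f + ½(∂f)²)) = 0`, i.e. the Gauss–Bonnet theorem
`τ(R·√det g) = τ(R·e^{f/2}) = 0` holds for the scalar curvature `R = −∂²f − ½(∂f)²`. -/
theorem stmt_12 {A : Type*} [NormedRing A] [StarRing A] [CStarRing A]
    [NormedAlgebra ℂ A] [CompleteSpace A] [StarModule ℂ A]
    (τ : A →L[ℂ] ℂ) (hτ : ∀ x y : A, τ (x * y) = τ (y * x))
    (D : A →L[ℂ] A) (hD : ∀ x y : A, D (x * y) = D x * y + x * D y)
    (hτD : ∀ x : A, τ (D x) = 0)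
    (f : A) (hf : IsSelfAdjoint f) (hcomm : f * D f = D f * f) :
    τ (exp ((1/2 : ℂ) • f) * (D (D f) + (1/2 : ℂ) • (D f * D f))) = 0 :=
  stmt_12_general τ D hD hτD f hcomm
end

section
/- Let A be a unital Banach algebra over ℂ, τ : A → ℂ a continuous linear tracial functional (τ(xy) = τ(yx)), and ∂₁, ∂₂ continuous ℂ-linear τ-invariant derivations (τ(∂ᵢ(x)) = 0) that commute: ∂₁∘∂₂ = ∂₂∘∂₁. Then for all a, b ∈ A: τ( (∂₁ a)·(∂₂ b) ) = τ( (∂₁ b)·(∂₂ a) ). -/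
/-- **Symmetry of mixed traces for commuting invariant derivations.**
If `τ` is a continuous tracial linear functional on a unital complex Banach algebra and
`∂₁, ∂₂` are commuting continuous `τ`-invariant derivations, then
`τ((∂₁a)(∂₂b)) = τ((∂₁b)(∂₂a))` for all `a, b`. -/
theorem stmt_14 {A : Type*} [NormedRing A] [NormedAlgebra ℂ A] [CompleteSpace A]
    (τ : A →L[ℂ] ℂ) (hτ : ∀ x y : A, τ (x * y) = τ (y * x))
    (D₁ D₂ : A →L[ℂ] A)
    (hD₁ : ∀ x y : A, D₁ (x * y) = D₁ x * y + x * D₁ y)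
    (hD₂ : ∀ x y : A, D₂ (x * y) = D₂ x * y + x * D₂ y)
    (hτD₁ : ∀ x : A, τ (D₁ x) = 0) (hτD₂ : ∀ x : A, τ (D₂ x) = 0)
    (hcomm : ∀ x : A, D₁ (D₂ x) = D₂ (D₁ x))
    (a b : A) :
    τ (D₁ a * D₂ b) = τ (D₁ b * D₂ a) := by
  have h1 : τ (D₁ a * D₂ b) + τ (a * D₁ (D₂ b)) = 0 := by
    have := hτD₁ (a * D₂ b); rw [hD₁] at this; simpa [map_add] using this
  have h2 : τ (D₂ a * D₁ b) + τ (a * D₂ (D₁ b)) = 0 := by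
    have := hτD₂ (a * D₁ b); rw [hD₂] at this; simpa [map_add] using this
  rw [hcomm] at h1
  have : τ (D₁ a * D₂ b) = τ (D₂ a * D₁ b) := by linear_combination h1 - h2
  rw [this, hτ]
end

section
/- Let A be a unital C*-algebra, τ : A → ℂ a continuous linear tracial functional (τ(xy) = τ(yx)), and ∂ : A → A a continuous ℂ-linear derivation. For self-adjoint f ∈ A and t ∈ ℝ define Ω_f(t) := ½·τ( (∂ e^{−tf/2})·(∂ e^{tf}) + (∂ e^{tf/2})·(∂ e^{tf})·e^{−tf} ). Then, as t → 0, Ω_f(t)/t⁴ converges to (1/16)·τ( f²·(∂f)·(∂f) − f·(∂f)·f·(∂f) ); in particular Ω_f(t) vanishes to fourth order at t = 0 (Ω_f(0) = Ω_f'(0) = Ω_f''(0) = Ω_f'''(0) = 0). -/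
/-!
Replacing each exponential by its Taylor polynomial of degree 4 changes `Ω_f(t)` only by
`O(t⁵)` and turns it into an explicit polynomial in `t` whose coefficients are traces of words
in `f` and the `∂(fᵏ)`. Leibniz's rule (`∂1 = 0`, `∂(f²) = ∂f·f + f·∂f`) and cyclicity of `τ`
make the coefficients of `t⁰, …, t³` vanish and identify the coefficient of `t⁴`. Hence
`Ω_f(t) = c·t⁴ + O(t⁵)`, which gives the limit; and since `Ω_f` is real analytic, `Ω_f = O(t⁴)`
means that `0` is a zero of order at least `4`, so the first three derivatives vanish there.
-/

open NormedSpace Topology Asymptotics Filter Polynomial Finset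

theorem Asymptotics.IsBigO.mul_sub_mul {α R : Type*} [NormedRing R] {l : Filter α}
    {a a' b b' : α → R} {g : α → ℝ} (ha : (fun x => a x - a' x) =O[l] g)
    (hb : (fun x => b x - b' x) =O[l] g) (ha_bdd : a =O[l] (fun _ => (1 : ℝ)))
    (hb'_bdd : b' =O[l] (fun _ => (1 : ℝ))) :
    (fun x => a x * b x - a' x * b' x) =O[l] g := by
  have hsplit (x : α) :
      a x * b x - a' x * b' x = a x * (b x - b' x) + (a x - a' x) * b' x := by
    noncomm_ring
  simp_rw [hsplit]
  exact ((ha_bdd.mul hb).trans (by simp [isBigO_refl])).add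
    ((ha.mul hb'_bdd).trans (by simp [isBigO_refl]))

theorem Polynomial.isBigO_eval_pow_of_coeff_eq_zero {𝕜 : Type*} [NormedField 𝕜] {p : 𝕜[X]}
    {n : ℕ} (hp : ∀ k < n, p.coeff k = 0) : (fun z => p.eval z) =O[𝓝 0] fun z => z ^ n := by
  obtain ⟨q, rfl⟩ := X_pow_dvd_iff.mpr hp
  simp only [eval_mul, eval_pow, eval_X]
  have hq : (fun z => q.eval z) =O[𝓝 (0 : 𝕜)] fun _ => (1 : 𝕜) :=
    (q.continuous.tendsto 0).isBigO_one 𝕜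
  simpa using (isBigO_refl (fun z : 𝕜 => z ^ n) _).mul hq

theorem NormedSpace.exp_sub_partialSum_isBigO {𝕂 𝔸 α : Type*} [RCLike 𝕂] [NormedRing 𝔸]
    [NormedAlgebra 𝕂 𝔸] [CompleteSpace 𝔸] {l : Filter α} {y : α → 𝔸} {g : α → 𝕂}
    (hy : y =O[l] g) (hg : Tendsto g l (𝓝 0)) (N : ℕ) :
    (fun a => exp (y a) - (expSeries 𝕂 𝔸).partialSum N (y a)) =O[l] fun a => g a ^ N := by
  have h := (exp_hasFPowerSeriesAt_zero (𝕂 := 𝕂) (𝔸 := 𝔸)).isBigO_sub_partialSum_pow N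
  simp only [zero_add] at h
  exact (h.comp_tendsto (hy.trans_tendsto hg)).trans (hy.norm_left.pow N)

theorem tendsto_div_pow_of_isBigO_sub_mul_pow {𝕜 : Type*} [NontriviallyNormedField 𝕜]
    {f : 𝕜 → 𝕜} {c : 𝕜} {n : ℕ}
    (h : (fun z => f z - c * z ^ n) =O[𝓝 0] fun z => z ^ (n + 1)) :
    Tendsto (fun z => f z / z ^ n) (𝓝[≠] 0) (𝓝 c) := by
  have hdiv := (h.trans_isLittleO (isLittleO_pow_pow n.lt_succ_self)).tendsto_div_nhds_zero
  have hc := (hdiv.mono_left (nhdsWithin_le_nhds (s := {0}ᶜ))).add_const c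
  rw [zero_add] at hc
  refine hc.congr' ?_
  filter_upwards [self_mem_nhdsWithin] with z (hz : z ≠ 0)
  rw [sub_div, mul_div_cancel_right₀ c (pow_ne_zero n hz), sub_add_cancel]

section AnalyticOrder

variable {𝕜 E : Type*} [NontriviallyNormedField 𝕜] [NormedAddCommGroup E] [NormedSpace 𝕜 E]
  {f : 𝕜 → E} {n : ℕ}

theorem AnalyticAt.natCast_le_analyticOrderAt_of_isBigO_pow (hf : AnalyticAt 𝕜 f 0)
    (h : f =O[𝓝 0] fun z => z ^ n) : (n : ℕ∞) ≤ analyticOrderAt f 0 := by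
  cases hm : analyticOrderAt f 0 with
  | top => exact le_top
  | coe m =>
    by_contra! hmn
    norm_cast at hmn
    obtain ⟨g, hg, hg0, hfg⟩ := hf.analyticOrderAt_eq_natCast.mp hm
    obtain ⟨C, hC⟩ := h.bound
    have hg_bound : g =O[𝓝[≠] 0] fun z => z ^ (n - m) := by
      refine IsBigO.of_bound C ?_
      filter_upwards [nhdsWithin_le_nhds hC, nhdsWithin_le_nhds hfg, self_mem_nhdsWithin]
        with z hz hfz (hz0 : z ≠ 0)
      rw [hfz, sub_zero, norm_smul, ← Nat.add_sub_cancel' hmn.le, pow_add, norm_mul] at hz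
      rw [mul_left_comm] at hz
      exact le_of_mul_le_mul_left hz (norm_pos_iff.mpr (pow_ne_zero m hz0))
    have hg_tendsto : Tendsto g (𝓝[≠] 0) (𝓝 0) := by
      refine hg_bound.trans_tendsto ?_
      simpa [zero_pow (Nat.sub_ne_zero_of_lt hmn)] using
        ((continuous_pow (n - m)).tendsto (0 : 𝕜)).mono_left nhdsWithin_le_nhds
    exact hg0 (tendsto_nhds_unique (hg.continuousAt.tendsto.mono_left nhdsWithin_le_nhds)
      hg_tendsto)

theorem AnalyticAt.iteratedDeriv_eq_zero_of_isBigO_pow [CharZero 𝕜] [CompleteSpace E]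
    (hf : AnalyticAt 𝕜 f 0) (h : f =O[𝓝 0] fun z => z ^ n) {k : ℕ} (hk : k < n) :
    iteratedDeriv k f 0 = 0 :=
  (natCast_le_analyticOrderAt_iff_iteratedDeriv_eq_zero hf).mp
    (hf.natCast_le_analyticOrderAt_of_isBigO_pow h) k hk

end AnalyticOrder

noncomputable section GaussBonnet

variable {A : Type*} [NormedRing A] [NormedAlgebra ℂ A]

def expCoeff (c : ℂ) (n : ℕ) : ℂ := c ^ n / n.factorial

theorem NormedSpace.expSeries_partialSum_mul_smul (c z : ℂ) (x : A) (N : ℕ) :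
    (expSeries ℂ A).partialSum N ((c * z) • x) =
      ∑ n ∈ range N, (expCoeff c n * z ^ n) • x ^ n := by
  refine sum_congr rfl fun n _ => ?_
  rw [expSeries_apply_eq, _root_.smul_pow, smul_smul, expCoeff]
  ring_nf

variable (τ : A →L[ℂ] ℂ)

theorem ContinuousLinearMap.map_sum_smul_mul_sum_smul_eq_eval (s : Finset ℕ) (a b : ℕ → ℂ)
    (u v : ℕ → A) (z : ℂ) :
    τ ((∑ i ∈ s, (a i * z ^ i) • u i) * ∑ j ∈ s, (b j * z ^ j) • v j) =
      (∑ i ∈ s, ∑ j ∈ s, C (a i * b j * τ (u i * v j)) * X ^ (i + j)).eval z := by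
  simp only [sum_mul_sum, map_sum, eval_finsetSum, smul_mul_smul_comm, map_smul, smul_eq_mul,
    eval_mul, eval_C, eval_pow, eval_X]
  refine sum_congr rfl fun i _ => sum_congr rfl fun j _ => ?_
  ring

theorem ContinuousLinearMap.map_sum_smul_mul_sum_smul_mul_sum_smul_eq_eval (s : Finset ℕ)
    (a b c : ℕ → ℂ) (u v w : ℕ → A) (z : ℂ) :
    τ ((∑ i ∈ s, (a i * z ^ i) • u i) * (∑ j ∈ s, (b j * z ^ j) • v j) *
        ∑ k ∈ s, (c k * z ^ k) • w k) =
      (∑ i ∈ s, ∑ j ∈ s, ∑ k ∈ s,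
        C (a i * b j * c k * τ (u i * v j * w k)) * X ^ (i + j + k)).eval z := by
  rw [sum_mul_sum, sum_mul]
  simp only [sum_mul_sum, map_sum, eval_finsetSum, smul_mul_smul_comm, map_smul, smul_eq_mul,
    eval_mul, eval_C, eval_pow, eval_X]
  refine sum_congr rfl fun i _ => sum_congr rfl fun j _ => sum_congr rfl fun k _ => ?_
  ring

variable (D : A →L[ℂ] A) (f : A)

def gaussBonnetForm (a b c d : A) : ℂ := 1 / 2 * τ (D a * D b + D c * D b * d)

def gaussBonnetTrace (z : ℂ) : ℂ :=
  gaussBonnetForm τ D (exp ((-z / 2) • f)) (exp (z • f)) (exp ((z / 2) • f)) (exp ((-z) • f))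

def gaussBonnetPoly : ℂ[X] :=
  C (1 / 2) * (∑ i ∈ range 5, ∑ j ∈ range 5,
      C (expCoeff (-2⁻¹) i * expCoeff 1 j * τ (D (f ^ i) * D (f ^ j))) * X ^ (i + j) +
    ∑ i ∈ range 5, ∑ j ∈ range 5, ∑ k ∈ range 5,
      C (expCoeff 2⁻¹ i * expCoeff 1 j * expCoeff (-1) k * τ (D (f ^ i) * D (f ^ j) * f ^ k)) *
        X ^ (i + j + k))

theorem eval_gaussBonnetPoly (z : ℂ) :
    (gaussBonnetPoly τ D f).eval z =
      gaussBonnetForm τ D ((expSeries ℂ A).partialSum 5 ((-z / 2) • f))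
        ((expSeries ℂ A).partialSum 5 (z • f)) ((expSeries ℂ A).partialSum 5 ((z / 2) • f))
        ((expSeries ℂ A).partialSum 5 ((-z) • f)) := by
  rw [show -z / 2 = -2⁻¹ * z by ring, show z / 2 = 2⁻¹ * z by ring, show -z = -1 * z by ring,
    show z • f = (1 * z) • f by rw [one_mul]]
  simp only [gaussBonnetForm, gaussBonnetPoly, expSeries_partialSum_mul_smul, map_sum, map_smul,
    map_add, τ.map_sum_smul_mul_sum_smul_eq_eval, τ.map_sum_smul_mul_sum_smul_mul_sum_smul_eq_eval,
    eval_mul, eval_add, eval_C]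

variable {τ D}

theorem map_one_eq_zero_of_leibniz (hD : ∀ x y : A, D (x * y) = D x * y + x * D y) :
    D 1 = 0 := by
  simpa using hD 1 1

theorem coeff_gaussBonnetPoly_of_lt_four (hτ : ∀ x y : A, τ (x * y) = τ (y * x))
    (hD : ∀ x y : A, D (x * y) = D x * y + x * D y) {k : ℕ} (hk : k < 4) :
    (gaussBonnetPoly τ D f).coeff k = 0 := by
  have hD1 := map_one_eq_zero_of_leibniz hD
  interval_cases k
  all_goals
    simp only [gaussBonnetPoly, sum_range_succ, sum_range_zero, coeff_C_mul, coeff_add,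
      coeff_X_pow]
    norm_num [expCoeff, Nat.factorial, hD1]
  -- only `k = 3` is left: it needs `∂(f²) = ∂f·f + f·∂f` and cyclicity
  rw [sq, hD]
  simp only [add_mul, mul_add, map_add, mul_assoc]
  have h₁ : τ (D f * (D f * f)) = τ (f * (D f * D f)) := by rw [← mul_assoc, hτ]
  have h₂ : τ (D f * (f * D f)) = τ (f * (D f * D f)) := by rw [hτ, mul_assoc]
  linear_combination (-1 / 2 : ℂ) * h₁ + (1 / 4 : ℂ) * h₂

theorem coeff_gaussBonnetPoly_four (hτ : ∀ x y : A, τ (x * y) = τ (y * x))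
    (hD : ∀ x y : A, D (x * y) = D x * y + x * D y) :
    (gaussBonnetPoly τ D f).coeff 4 = 1 / 16 * τ (f * f * D f * D f - f * D f * (f * D f)) := by
  simp only [gaussBonnetPoly, sum_range_succ, sum_range_zero, coeff_C_mul, coeff_add, coeff_X_pow]
  norm_num [expCoeff, Nat.factorial, map_one_eq_zero_of_leibniz hD]
  rw [sq, hD]
  simp only [add_mul, mul_add, map_add, mul_assoc]
  have h₁ : τ (D f * (f * (D f * f))) = τ (f * (D f * (f * D f))) := by
    rw [hτ]; simp only [mul_assoc]
  have h₂ : τ (D f * (f * (f * D f))) = τ (f * (f * (D f * D f))) := by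
    rw [hτ]; simp only [mul_assoc]
  linear_combination (-1 / 8 : ℂ) * h₁ + (1 / 16 : ℂ) * h₂

theorem gaussBonnetForm_sub_isBigO {α : Type*} {l : Filter α} {g : α → ℝ}
    {a b c d a' b' c' d' : α → A}
    (ha : (fun x => a x - a' x) =O[l] g) (hb : (fun x => b x - b' x) =O[l] g)
    (hc : (fun x => c x - c' x) =O[l] g) (hd : (fun x => d x - d' x) =O[l] g)
    (ha₁ : a =O[l] fun _ => (1 : ℝ)) (hb₁ : b =O[l] fun _ => (1 : ℝ))
    (hc₁ : c =O[l] fun _ => (1 : ℝ)) (hb₁' : b' =O[l] fun _ => (1 : ℝ))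
    (hd₁' : d' =O[l] fun _ => (1 : ℝ)) :
    (fun x => gaussBonnetForm τ D (a x) (b x) (c x) (d x) -
      gaussBonnetForm τ D (a' x) (b' x) (c' x) (d' x)) =O[l] g := by
  have hD {u u' : α → A} (h : (fun x => u x - u' x) =O[l] g) :
      (fun x => D (u x) - D (u' x)) =O[l] g := by
    simpa only [map_sub] using (D.isBigO_comp _ l).trans h
  have hD₁ {u : α → A} (h : u =O[l] fun _ => (1 : ℝ)) :
      (fun x => D (u x)) =O[l] fun _ => (1 : ℝ) :=
    (D.isBigO_comp _ l).trans h
  have hab := (hD ha).mul_sub_mul (hD hb) (hD₁ ha₁) (hD₁ hb₁')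
  have hcbd := ((hD hc).mul_sub_mul (hD hb) (hD₁ hc₁) (hD₁ hb₁')).mul_sub_mul hd
    (by simpa using (hD₁ hc₁).mul (hD₁ hb₁)) hd₁'
  refine (((τ.isBigO_comp _ l).trans (hab.add hcbd)).const_mul_left (1 / 2)).congr_left
    fun x => ?_
  simp only [gaussBonnetForm, map_add, map_sub]
  ring

theorem gaussBonnetTrace_sub_eval_gaussBonnetPoly_isBigO [CompleteSpace A] :
    (fun z => gaussBonnetTrace τ D f z - (gaussBonnetPoly τ D f).eval z) =O[𝓝 0]
      fun z => z ^ 5 := by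
  have htaylor {y : ℂ → A} (hy : Differentiable ℂ y) (hy₀ : y 0 = 0) :
      ((fun z => exp (y z) - (expSeries ℂ A).partialSum 5 (y z)) =O[𝓝 0] fun z => ‖z‖ ^ 5) ∧
      ((fun z => exp (y z)) =O[𝓝 0] fun _ => (1 : ℝ)) ∧
      ((fun z => (expSeries ℂ A).partialSum 5 (y z)) =O[𝓝 0] fun _ => (1 : ℝ)) := by
    have hyO : y =O[𝓝 0] fun z => z := by
      simpa [hy₀] using (hy 0).isBigO_sub
    refine ⟨?_, ?_, ?_⟩
    · simpa using (exp_sub_partialSum_isBigO hyO tendsto_id 5).norm_right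
    · exact ((exp_analytic (𝕂 := ℂ) (y 0)).continuousAt.comp
        (hy 0).continuousAt).tendsto.isBigO_one ℝ
    · exact ((((expSeries ℂ A).partialSum_continuous 5).comp hy.continuous).tendsto 0).isBigO_one ℝ
  obtain ⟨ha, ha₁, -⟩ := htaylor (y := fun z => (-z / 2) • f) (by fun_prop) (by simp)
  obtain ⟨hb, hb₁, hb₁'⟩ := htaylor (y := fun z => z • f) (by fun_prop) (by simp)
  obtain ⟨hc, hc₁, -⟩ := htaylor (y := fun z => (z / 2) • f) (by fun_prop) (by simp)
  obtain ⟨hd, -, hd₁'⟩ := htaylor (y := fun z => (-z) • f) (by fun_prop) (by simp)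
  simpa only [gaussBonnetTrace, eval_gaussBonnetPoly] using
    (gaussBonnetForm_sub_isBigO ha hb hc hd ha₁ hb₁ hc₁ hb₁' hd₁').trans
      (isBigO_of_le _ fun z => by simp)

theorem gaussBonnetTrace_sub_isBigO [CompleteSpace A] (hτ : ∀ x y : A, τ (x * y) = τ (y * x))
    (hD : ∀ x y : A, D (x * y) = D x * y + x * D y) :
    (fun z => gaussBonnetTrace τ D f z -
        1 / 16 * τ (f * f * D f * D f - f * D f * (f * D f)) * z ^ 4) =O[𝓝 0] fun z => z ^ 5 := by
  have hpoly := isBigO_eval_pow_of_coeff_eq_zero (p := gaussBonnetPoly τ D f -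
    C (1 / 16 * τ (f * f * D f * D f - f * D f * (f * D f))) * X ^ 4) (n := 5) fun k hk => by
    rw [coeff_sub, coeff_C_mul_X_pow]
    obtain hk | rfl := (Nat.lt_succ_iff.mp hk).lt_or_eq
    · rw [coeff_gaussBonnetPoly_of_lt_four f hτ hD hk, if_neg hk.ne, sub_zero]
    · rw [coeff_gaussBonnetPoly_four f hτ hD, if_pos rfl, sub_self]
  refine ((gaussBonnetTrace_sub_eval_gaussBonnetPoly_isBigO (τ := τ) (D := D) f).add
    hpoly).congr_left fun z => ?_
  simp only [eval_sub, eval_mul, eval_C, eval_pow, eval_X]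
  ring

theorem analyticAt_gaussBonnetTrace [CompleteSpace A] (z : ℂ) :
    AnalyticAt ℂ (gaussBonnetTrace τ D f) z := by
  have hτ : ∀ x, AnalyticAt ℂ τ x := τ.analyticAt
  have hD : ∀ x, AnalyticAt ℂ D x := D.analyticAt
  have hexp : ∀ x : A, AnalyticAt ℂ exp x := exp_analytic
  unfold gaussBonnetTrace gaussBonnetForm
  fun_prop

end GaussBonnet

theorem stmt_17_general {A : Type*} [NormedRing A]
    [NormedAlgebra ℂ A] [CompleteSpace A]
    (τ : A →L[ℂ] ℂ) (hτ : ∀ x y : A, τ (x * y) = τ (y * x))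
    (D : A →L[ℂ] A) (hD : ∀ x y : A, D (x * y) = D x * y + x * D y)
    (f : A) :
    let Ω : ℝ → ℂ := fun t => (1/2 : ℂ) *
      τ (D (exp ((-(t : ℂ)/2) • f)) * D (exp ((t : ℂ) • f))
        + D (exp (((t : ℂ)/2) • f)) * D (exp ((t : ℂ) • f)) * exp ((-(t : ℂ)) • f))
    Filter.Tendsto (fun t : ℝ => Ω t / (t : ℂ) ^ 4) (𝓝[≠] (0 : ℝ))
      (𝓝 ((1/16 : ℂ) * τ (f * f * D f * D f - f * D f * (f * D f)))) ∧
    Ω 0 = 0 ∧ deriv Ω 0 = 0 ∧ iteratedDeriv 2 Ω 0 = 0 ∧ iteratedDeriv 3 Ω 0 = 0 := by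
  intro Ω
  have hΩ : Ω = fun t : ℝ => gaussBonnetTrace τ D f t := rfl
  have hΦ := gaussBonnetTrace_sub_isBigO f hτ hD
  have hΦ_O : gaussBonnetTrace τ D f =O[𝓝 0] fun z => z ^ 4 :=
    ((hΦ.trans (isLittleO_pow_pow (by norm_num : 4 < 5)).isBigO).add
      ((isBigO_refl _ _).const_mul_left _)).congr_left fun z => sub_add_cancel _ _
  have hΩ_O : Ω =O[𝓝 0] fun t : ℝ => t ^ 4 :=
    (Complex.isBigO_comp_ofReal_nhds (x := 0) (by simpa using hΦ_O)).trans
      (isBigO_of_le (f := fun t : ℝ => (t : ℂ) ^ 4) (g := fun t : ℝ => t ^ 4) _ fun t => by simp)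
  have hΩ_an : AnalyticAt ℝ Ω 0 := by
    rw [hΩ]
    exact (analyticAt_gaussBonnetTrace f _).restrictScalars.comp
      (Complex.ofRealCLM.analyticAt 0)
  have hderiv {k : ℕ} (hk : k < 4) : iteratedDeriv k Ω 0 = 0 :=
    hΩ_an.iteratedDeriv_eq_zero_of_isBigO_pow hΩ_O hk
  refine ⟨?_, by simpa using hderiv (k := 0) (by norm_num),
    by simpa using hderiv (k := 1) (by norm_num), hderiv (by norm_num), hderiv (by norm_num)⟩
  exact (tendsto_div_pow_of_isBigO_sub_mul_pow hΦ).comp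
    (Complex.continuous_ofReal.continuousWithinAt.tendsto_nhdsWithin fun t ht => by simpa using ht)

/-- **Fourth-order vanishing of the perturbed Gauss–Bonnet trace.**
For the perturbed metric `diag(e^{tf}, 1)` on the noncommutative two-torus, the
Gauss–Bonnet trace `Ω_f(t) = ½τ((∂e^{−tf/2})(∂e^{tf}) + (∂e^{tf/2})(∂e^{tf})e^{−tf})`
satisfies `Ω_f(t)/t⁴ → (1/16)·τ(f²(∂f)² − f(∂f)f(∂f))` as `t → 0`; in particular
`Ω_f(0) = Ω_f'(0) = Ω_f''(0) = Ω_f'''(0) = 0`. -/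
theorem stmt_17 {A : Type*} [NormedRing A] [StarRing A] [CStarRing A]
    [NormedAlgebra ℂ A] [CompleteSpace A] [StarModule ℂ A]
    (τ : A →L[ℂ] ℂ) (hτ : ∀ x y : A, τ (x * y) = τ (y * x))
    (D : A →L[ℂ] A) (hD : ∀ x y : A, D (x * y) = D x * y + x * D y)
    (f : A) (hf : IsSelfAdjoint f) :
    let Ω : ℝ → ℂ := fun t => (1/2 : ℂ) *
      τ (D (exp ((-(t : ℂ)/2) • f)) * D (exp ((t : ℂ) • f))
        + D (exp (((t : ℂ)/2) • f)) * D (exp ((t : ℂ) • f)) * exp ((-(t : ℂ)) • f))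
    Filter.Tendsto (fun t : ℝ => Ω t / (t : ℂ) ^ 4) (𝓝[≠] (0 : ℝ))
      (𝓝 ((1/16 : ℂ) * τ (f * f * D f * D f - f * D f * (f * D f)))) ∧
    Ω 0 = 0 ∧ deriv Ω 0 = 0 ∧ iteratedDeriv 2 Ω 0 = 0 ∧ iteratedDeriv 3 Ω 0 = 0 :=
  stmt_17_general τ hτ D hD f
end

section
/- Let A be a unital C*-algebra, τ : A → ℂ a continuous linear functional that is tracial (τ(xy) = τ(yx)), positive (τ(x*x) is a nonnegative real), and faithful (τ(x*x) = 0 implies x = 0), and let δ : A → A be a continuous ℂ-linear *-derivation (δ(xy) = δ(x)y + xδ(y) and δ(x*) = (δ(x))*). Then for every projection p ∈ A (p = p* = p²): (i) τ( p·δ(p)·p·δ(p) ) = 0; (ii) τ( p²·δ(p)·δ(p) − p·δ(p)·p·δ(p) ) is a nonnegative real number, and it equals 0 if and only if δ(p)·p = 0. -/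
open ComplexOrder

/-!
Write `d = δ p`. The Leibniz rule applied to `p = p²` gives `d = d p + p d`, and sandwiching this
between two copies of `p` gives `p d p = 2 p d p`, so `p d p = 0`; this is (i). By the trace
property `τ(p² d²) = τ(d p d) = τ((p d)* (p d))`, so the quantity in (ii) is `τ(x* x)` with
`x = p d`, which is nonnegative and, by faithfulness, vanishes iff `p d = 0`, i.e. iff
`d p = (p d)* = 0`.
-/

theorem IsIdempotentElem.mul_mul_eq_zero_of_eq_mul_add_mul {R : Type*} [NonUnitalRing R]
    {p d : R} (hp : IsIdempotentElem p) (hd : d = d * p + p * d) : p * d * p = 0 := by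
  have h : p * d * p = p * d * p + p * d * p :=
    calc p * d * p = p * (d * p + p * d) * p := by rw [← hd]
      _ = p * d * (p * p) + p * p * (d * p) := by noncomm_ring
      _ = p * d * p + p * d * p := by rw [hp.eq]; noncomm_ring
  exact left_eq_add.mp h

section StarProjection

variable {R : Type*} [NonUnitalRing R] [StarRing R] {p d : R}

theorem IsStarProjection.star_mul_eq_mul (hp : IsStarProjection p) (hd : IsSelfAdjoint d) :
    star (p * d) = d * p := by
  rw [star_mul, hd.star_eq, hp.isSelfAdjoint.star_eq]

theorem IsStarProjection.star_mul_mul_self_eq (hp : IsStarProjection p) (hd : IsSelfAdjoint d) :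
    star (p * d) * (p * d) = d * p * d := by
  rw [hp.star_mul_eq_mul hd, mul_assoc, ← mul_assoc p, hp.isIdempotentElem.eq, ← mul_assoc]

theorem IsStarProjection.apply_sub_eq_apply_star_mul_self {M F : Type*} [AddCommGroup M]
    [FunLike F R M] [AddMonoidHomClass F R M] (τ : F) (hτ : ∀ x y : R, τ (x * y) = τ (y * x))
    (hp : IsStarProjection p) (hd : IsSelfAdjoint d) (hpdp : p * d * p = 0) :
    τ (p * p * d * d - p * d * p * d) = τ (star (p * d) * (p * d)) := by
  rw [hp.star_mul_mul_self_eq hd, hpdp, zero_mul, sub_zero, hp.isIdempotentElem.eq, mul_assoc,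
    hτ, mul_assoc, hτ]

end StarProjection

theorem stmt_19_general {A : Type*} [NormedRing A] [StarRing A]
    [NormedAlgebra ℂ A]
    (τ : A →L[ℂ] ℂ) (hτ : ∀ x y : A, τ (x * y) = τ (y * x))
    (hpos : ∀ x : A, 0 ≤ τ (star x * x))
    (hfaithful : ∀ x : A, τ (star x * x) = 0 → x = 0)
    (δ : A →L[ℂ] A) (hδ : ∀ x y : A, δ (x * y) = δ x * y + x * δ y)
    (hδstar : ∀ x : A, δ (star x) = star (δ x))
    (p : A) (hpstar : star p = p) (hpidem : p * p = p) :
    τ (p * δ p * p * δ p) = 0 ∧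
    0 ≤ τ (p * p * δ p * δ p - p * δ p * p * δ p) ∧
    (τ (p * p * δ p * δ p - p * δ p * p * δ p) = 0 ↔ δ p * p = 0) := by
  have hp : IsStarProjection p := ⟨hpidem, hpstar⟩
  have hd : IsSelfAdjoint (δ p) := by rw [IsSelfAdjoint, ← hδstar, hpstar]
  have hpdp : p * δ p * p = 0 :=
    hp.isIdempotentElem.mul_mul_eq_zero_of_eq_mul_add_mul (by rw [← hδ, hpidem])
  have key := hp.apply_sub_eq_apply_star_mul_self τ hτ hd hpdp
  refine ⟨by rw [hpdp, zero_mul, map_zero], key ▸ hpos _, ?_⟩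
  rw [key, ← hp.star_mul_eq_mul hd, star_eq_zero]
  exact ⟨hfaithful _, fun h ↦ by rw [h, mul_zero, map_zero]⟩

/-- **Projections and the fourth-order Gauss–Bonnet coefficient.**
Let `τ` be a continuous tracial, positive and faithful linear functional on a unital
C*-algebra and `δ` a continuous `ℂ`-linear *-derivation.  Then for every projection `p`:
(i) `τ(p·δ(p)·p·δ(p)) = 0`; (ii) `τ(p²·δ(p)·δ(p) − p·δ(p)·p·δ(p))` is a nonnegative real
number, and it vanishes iff `δ(p)·p = 0`. -/
theorem stmt_19 {A : Type*} [NormedRing A] [StarRing A] [CStarRing A]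
    [NormedAlgebra ℂ A] [CompleteSpace A] [StarModule ℂ A]
    (τ : A →L[ℂ] ℂ) (hτ : ∀ x y : A, τ (x * y) = τ (y * x))
    (hpos : ∀ x : A, 0 ≤ τ (star x * x))
    (hfaithful : ∀ x : A, τ (star x * x) = 0 → x = 0)
    (δ : A →L[ℂ] A) (hδ : ∀ x y : A, δ (x * y) = δ x * y + x * δ y)
    (hδstar : ∀ x : A, δ (star x) = star (δ x))
    (p : A) (hpstar : star p = p) (hpidem : p * p = p) :
    τ (p * δ p * p * δ p) = 0 ∧
    0 ≤ τ (p * p * δ p * δ p - p * δ p * p * δ p) ∧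
    (τ (p * p * δ p * δ p - p * δ p * p * δ p) = 0 ↔ δ p * p = 0) :=
  stmt_19_general τ hτ hpos hfaithful δ hδ hδstar p hpstar hpidem
end
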